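/- arXiv:2510.10144 — 3 statements merged into one kernel-verified Lean document; each statement's English description precedes it below -/
import Mathlib

section
/- Let A be a unital associative algebra over ℚ and I ⊆ A a two-sided ideal with I^N = 0 for some N ≥ 1. Then for all x, y ∈ I, the linear endomorphism exp(ad_{BCH(x,y)}) of A equals the composite exp(ad_x) ∘ exp(ad_y); that is, for every a ∈ A, Σ_{n≥0} (1/n!)·ad_{BCH(x,y)}ⁿ(a) = Σ_{n≥0} (1/n!)·ad_xⁿ( Σ_{m≥0} (1/m!)·ad_yᵐ(a) ). -/
/-!
Setting: `A` a unital associative ℚ-algebra, `I ⊆ A` a two-sided ideal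
(encoded as a `Submodule ℚ A` with `⊤ * I ≤ I` and `I * ⊤ ≤ I`, powers taken
as submodule products) with `I ^ N = ⊥`.  For `x ∈ I` the exponential
`exp x = Σ_{k≥0} x^k/k!` and logarithm `log(1+u) = Σ_{k≥1} (-1)^{k-1} u^k/k`
are finite sums; truncating at `N` captures all (possibly) nonzero terms.
-/

/-- The (truncated) exponential `Σ_{k<n} x^k / k!` of a nilpotent element. -/
noncomputable def expNil {A : Type*} [Ring A] [Algebra ℚ A] (n : ℕ) (x : A) : A :=
  ∑ k ∈ Finset.range n, (k.factorial : ℚ)⁻¹ • x ^ k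

/-- The (truncated) logarithm `log(1+u) = Σ_{0≤k<n} (-1)^k u^(k+1)/(k+1)`. -/
noncomputable def logNil {A : Type*} [Ring A] [Algebra ℚ A] (n : ℕ) (u : A) : A :=
  ∑ k ∈ Finset.range n, (((-1 : ℚ) ^ k / (k + 1))) • u ^ (k + 1)

/-- The Baker–Campbell–Hausdorff element `BCH(x,y) = log(exp x · exp y)`. -/
noncomputable def bch {A : Type*} [Ring A] [Algebra ℚ A] (n : ℕ) (x y : A) : A :=
  logNil n (expNil n x * expNil n y - 1)

/-- The adjoint operator `ad_λ(a) = λa − aλ`. -/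
def adA {A : Type*} [Ring A] (l a : A) : A := l * a - a * l

/-!
Write `ad_l = L_l - R_l` with `L_l`, `R_l` left and right multiplication by `l`: these commute,
so `exp(ad_l) = exp(L_l) exp(-R_l)` is conjugation `a ↦ exp(l) a exp(-l)`. The theorem thus reduces
to `exp(BCH(x, y)) = exp(x) exp(y)`, i.e. to `exp(log(1 + u)) = 1 + u` for `u ∈ I`. The latter is
the image under `X ↦ u` of the congruence `exp(log(1 + X)) ≡ 1 + X mod X^N` in `ℚ[X]`, which
holds because both sides solve `(1 + X) F' = F` with `F(0) = 1` up to order `N`.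
-/

open Polynomial Finset IsNilpotent

section Transfer

variable {A B : Type*} [Ring A] [Algebra ℚ A] [Ring B] [Algebra ℚ B]

theorem map_expNil (f : A →ₐ[ℚ] B) (n : ℕ) (a : A) : f (expNil n a) = expNil n (f a) := by
  simp [expNil]

theorem map_logNil (f : A →ₐ[ℚ] B) (n : ℕ) (a : A) : f (logNil n a) = logNil n (f a) := by
  simp [logNil]

theorem expNil_eq_exp {n : ℕ} {a : A} (h : a ^ n = 0) : expNil n a = exp a :=
  (exp_eq_sum h).symm

theorem aeval_eq_zero_of_X_pow_dvd {n : ℕ} {a : A} (ha : a ^ n = 0) {p : ℚ[X]}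
    (h : X ^ n ∣ p) : aeval a p = 0 := by
  obtain ⟨q, rfl⟩ := h
  simp [ha]

end Transfer

section ExpLogPolynomial

theorem X_dvd_logNil_X (n : ℕ) : X ∣ logNil n (X : ℚ[X]) :=
  Finset.dvd_sum fun k _ => dvd_smul_of_dvd _ (dvd_pow_self X k.succ_ne_zero)

theorem one_add_X_mul_derivative_logNil_X (n : ℕ) :
    (1 + X) * derivative (logNil n (X : ℚ[X])) = 1 - (-X) ^ n := by
  have : derivative (logNil n (X : ℚ[X])) = ∑ k ∈ range n, (-X) ^ k := by
    simp only [logNil, map_sum, derivative_smul, derivative_X_pow]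
    refine Finset.sum_congr rfl fun k _ => ?_
    rw [neg_pow (X : ℚ[X]), smul_eq_C_mul, ← mul_assoc, ← C_mul]
    push_cast
    field_simp
    simp
  rw [this, ← mul_neg_geom_sum, sub_neg_eq_add]

theorem derivative_expNil (n : ℕ) (p : ℚ[X]) :
    derivative (expNil (n + 1) p) = expNil n p * derivative p := by
  simp only [expNil, sum_range_succ' _ n, map_add, map_sum, derivative_smul, sum_mul]
  simp only [derivative_pow, pow_zero, derivative_one, smul_zero, add_zero]
  refine Finset.sum_congr rfl fun k _ => ?_
  rw [Nat.factorial_succ, add_tsub_cancel_right, smul_eq_C_mul, smul_eq_C_mul, ← mul_assoc,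
    ← mul_assoc, ← C_mul]
  push_cast
  field_simp

/-- Below order `n` the coefficients of `F` obey `(d + 1) F_{d+1} = (1 - d) F_d`. -/
theorem X_pow_succ_dvd_of_X_pow_dvd_one_add_X_mul_derivative_sub {n : ℕ} {F : ℚ[X]}
    (h0 : F.coeff 0 = 0) (h : X ^ n ∣ (1 + X) * derivative F - F) : X ^ (n + 1) ∣ F := by
  rw [X_pow_dvd_iff] at h ⊢
  intro d hd
  induction d with
  | zero => exact h0
  | succ d ih =>
    have hFd : F.coeff d = 0 := ih (by omega)
    have hXF' : (X * derivative F).coeff d = 0 := by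
      cases d with
      | zero => simp
      | succ j => rw [coeff_X_mul, coeff_derivative, hFd, zero_mul]
    have := h d (by omega)
    rw [one_add_mul, coeff_sub, coeff_add, hXF', hFd, coeff_derivative] at this
    simpa [Nat.cast_add_one_ne_zero] using this

theorem X_pow_dvd_expNil_logNil_X_sub (n : ℕ) :
    X ^ n ∣ expNil (n + 1) (logNil n (X : ℚ[X])) - (1 + X) := by
  set L := logNil n (X : ℚ[X])
  have hE0 : (expNil (n + 1) L).coeff 0 = 1 := by
    rw [coeff_zero_eq_aeval_zero, map_expNil, aeval_eq_zero_of_X_pow_dvd (pow_one 0)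
      (by simpa using X_dvd_logNil_X n), expNil_eq_exp (zero_pow n.succ_ne_zero), exp_zero]
  have hode : (1 + X) * derivative (expNil (n + 1) L - (1 + X)) - (expNil (n + 1) L - (1 + X))
      = -(expNil n L * (-X) ^ n) - (n.factorial : ℚ)⁻¹ • L ^ n := by
    have hsplit : expNil (n + 1) L = expNil n L + (n.factorial : ℚ)⁻¹ • L ^ n :=
      sum_range_succ _ n
    simp only [map_sub, derivative_expNil, derivative_add, derivative_one, derivative_X]
    rw [hsplit]
    linear_combination expNil n L * one_add_X_mul_derivative_logNil_X n
  refine dvd_trans (pow_dvd_pow X n.le_succ)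
    (X_pow_succ_dvd_of_X_pow_dvd_one_add_X_mul_derivative_sub (by simp [hE0]) ?_)
  rw [hode]
  exact dvd_sub (dvd_neg.2 (dvd_mul_of_dvd_right (by simp [neg_pow (X : ℚ[X])]) _))
    (dvd_smul_of_dvd _ (pow_dvd_pow_of_dvd (X_dvd_logNil_X n) n))

end ExpLogPolynomial

section Nilpotent

variable {A : Type*} [Ring A] [Algebra ℚ A]

theorem logNil_pow_eq_zero {n : ℕ} {u : A} (hu : u ^ n = 0) : logNil n u ^ n = 0 := by
  rw [← aeval_X (R := ℚ) u, ← map_logNil, ← map_pow]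
  exact aeval_eq_zero_of_X_pow_dvd hu (pow_dvd_pow_of_dvd (X_dvd_logNil_X n) n)

theorem exp_logNil {n : ℕ} {u : A} (hu : u ^ n = 0) : exp (logNil n u) = 1 + u := by
  have h := aeval_eq_zero_of_X_pow_dvd hu (X_pow_dvd_expNil_logNil_X_sub n)
  rwa [map_sub, map_expNil, map_logNil, map_add, map_one, aeval_X, sub_eq_zero,
    expNil_eq_exp (pow_eq_zero_of_le n.le_succ (logNil_pow_eq_zero hu))] at h

theorem exp_mulLeft {l : A} (hl : IsNilpotent l) :
    exp (LinearMap.mulLeft ℚ l) = LinearMap.mulLeft ℚ (exp l) :=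
  (map_exp hl (Algebra.lmul ℚ A)).symm

theorem exp_mulRight {l : A} (hl : IsNilpotent l) :
    exp (LinearMap.mulRight ℚ l) = LinearMap.mulRight ℚ (exp l) := by
  obtain ⟨n, hn⟩ := hl
  have hR : LinearMap.mulRight ℚ l ^ n = 0 := by
    rw [LinearMap.pow_mulRight, hn, LinearMap.mulRight_zero_eq_zero]
  ext a
  simp [exp_eq_sum hn, exp_eq_sum hR, mul_sum]

end Nilpotent

section Adjoint

open LieAlgebra

attribute [local instance] LieRing.ofAssociativeRing LieAlgebra.ofAssociativeAlgebra

variable {A : Type*} [Ring A] [Algebra ℚ A]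

theorem adA_eq_ad (l : A) : adA l = ad ℚ A l := by
  ext a
  simp [adA, Ring.lie_def]

theorem ad_eq_mulLeft_add_mulRight_neg (l : A) :
    ad ℚ A l = LinearMap.mulLeft ℚ l + LinearMap.mulRight ℚ (-l) := by
  ext b
  simp [Ring.lie_def, sub_eq_add_neg]

theorem ad_pow_eq_zero {n : ℕ} {l : A} (hl : l ^ n = 0) : ad ℚ A l ^ (2 * n) = 0 := by
  rw [ad_eq_mulLeft_add_mulRight_neg]
  refine (LinearMap.commute_mulLeft_right l (-l)).add_pow_eq_zero_of_add_le_succ_of_pow_eq_zero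
    (m := n) (n := n) ?_ ?_ (by omega)
  · rw [LinearMap.pow_mulLeft, hl, LinearMap.mulLeft_zero_eq_zero]
  · rw [LinearMap.pow_mulRight, neg_pow, hl, mul_zero, LinearMap.mulRight_zero_eq_zero]

theorem sum_adA_iterate_eq_exp_ad {n : ℕ} {l : A} (hl : l ^ n = 0) (a : A) :
    ∑ k ∈ range (2 * n), (k.factorial : ℚ)⁻¹ • (adA l)^[k] a = exp (ad ℚ A l) a := by
  simp [exp_eq_sum (ad_pow_eq_zero hl), adA_eq_ad, Module.End.pow_apply]

theorem exp_ad_apply {l : A} (hl : IsNilpotent l) (a : A) :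
    exp (ad ℚ A l) a = exp l * a * exp (-l) := by
  have hL : IsNilpotent (LinearMap.mulLeft ℚ l) := (LinearMap.isNilpotent_mulLeft_iff ℚ l).2 hl
  have hR : IsNilpotent (LinearMap.mulRight ℚ (-l)) :=
    (LinearMap.isNilpotent_mulRight_iff ℚ (-l)).2 hl.neg
  rw [ad_eq_mulLeft_add_mulRight_neg,
    exp_add_of_commute (LinearMap.commute_mulLeft_right l (-l)) hL hR, exp_mulLeft hl,
    exp_mulRight hl.neg]
  simp [mul_assoc]

end Adjoint

section Ideal

variable {A : Type*} [Ring A] [Algebra ℚ A] {I : Submodule ℚ A}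

theorem pow_eq_zero_of_mem_of_pow_eq_bot {N : ℕ} (hnil : I ^ N = ⊥) {x : A} (hx : x ∈ I) :
    x ^ N = 0 := by
  simpa [hnil] using Submodule.pow_mem_pow I hx N

theorem exp_sub_one_mem (hI : I * ⊤ ≤ I) {x : A} (hx : x ∈ I) (hxn : IsNilpotent x) :
    exp x - 1 ∈ I := by
  obtain ⟨k, hk⟩ := hxn
  rw [exp_eq_sum (pow_eq_zero_of_le k.le_succ hk), sum_range_succ']
  simp only [pow_zero, Nat.factorial_zero, Nat.cast_one, inv_one, one_smul, add_sub_cancel_right]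
  refine Submodule.sum_mem I fun i _ => Submodule.smul_mem I _ ?_
  rw [pow_succ']
  exact hI (Submodule.mul_mem_mul hx Submodule.mem_top)

end Ideal

/-- The adjoint operators involved vanish from order `2N` on, so truncating the exponential series
at `2N` loses nothing. -/
theorem exp_ad_bch_general {A : Type*} [Ring A] [Algebra ℚ A]
    (I : Submodule ℚ A)
    (hIr : I * (⊤ : Submodule ℚ A) ≤ I)
    (N : ℕ) (hnil : I ^ N = ⊥) :
    ∀ x ∈ I, ∀ y ∈ I, ∀ a : A,
      ∑ n ∈ Finset.range (2 * N), (n.factorial : ℚ)⁻¹ • (adA (bch N x y))^[n] a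
        = ∑ n ∈ Finset.range (2 * N), (n.factorial : ℚ)⁻¹ •
            (adA x)^[n] (∑ m ∈ Finset.range (2 * N), (m.factorial : ℚ)⁻¹ • (adA y)^[m] a) := by
  intro x hx y hy a
  have hxN := pow_eq_zero_of_mem_of_pow_eq_bot hnil hx
  have hyN := pow_eq_zero_of_mem_of_pow_eq_bot hnil hy
  have hu : (exp x * exp y - 1) ^ N = 0 := by
    refine pow_eq_zero_of_mem_of_pow_eq_bot hnil ?_
    rw [show exp x * exp y - 1 = (exp x - 1) * exp y + (exp y - 1) by noncomm_ring]
    exact add_mem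
      (hIr (Submodule.mul_mem_mul (exp_sub_one_mem hIr hx ⟨N, hxN⟩) Submodule.mem_top))
      (exp_sub_one_mem hIr hy ⟨N, hyN⟩)
  have hb : bch N x y = logNil N (exp x * exp y - 1) := by
    rw [bch, expNil_eq_exp hxN, expNil_eq_exp hyN]
  have hbN : bch N x y ^ N = 0 := hb ▸ logNil_pow_eq_zero hu
  have hexp : exp (bch N x y) = exp x * exp y := by rw [hb, exp_logNil hu, add_sub_cancel]
  have hexp_neg : exp (-bch N x y) = exp (-y) * exp (-x) := by
    refine left_inv_eq_right_inv (exp_neg_mul_exp_self ⟨N, hbN⟩) ?_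
    rw [hexp, mul_assoc, ← mul_assoc (exp y), exp_mul_exp_neg_self ⟨N, hyN⟩, one_mul,
      exp_mul_exp_neg_self ⟨N, hxN⟩]
  rw [sum_adA_iterate_eq_exp_ad hbN, sum_adA_iterate_eq_exp_ad hyN, sum_adA_iterate_eq_exp_ad hxN,
    exp_ad_apply ⟨N, hbN⟩, exp_ad_apply ⟨N, hyN⟩, exp_ad_apply ⟨N, hxN⟩, hexp, hexp_neg]
  simp only [mul_assoc]

/-- `exp(ad_{BCH(x,y)}) = exp(ad_x) ∘ exp(ad_y)` as endomorphisms of `A`.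
Since `x, y, BCH(x,y) ∈ I` and `I^N = ⊥`, all the adjoint operators involved
vanish from order `2N` on, so truncating the exponential series at `2N`
captures all (possibly) nonzero terms. -/
theorem exp_ad_bch {A : Type*} [Ring A] [Algebra ℚ A]
    (I : Submodule ℚ A)
    (hIl : (⊤ : Submodule ℚ A) * I ≤ I) (hIr : I * (⊤ : Submodule ℚ A) ≤ I)
    (N : ℕ) (hN : 1 ≤ N) (hnil : I ^ N = ⊥) :
    ∀ x ∈ I, ∀ y ∈ I, ∀ a : A,
      ∑ n ∈ Finset.range (2 * N), (n.factorial : ℚ)⁻¹ • (adA (bch N x y))^[n] a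
        = ∑ n ∈ Finset.range (2 * N), (n.factorial : ℚ)⁻¹ •
            (adA x)^[n] (∑ m ∈ Finset.range (2 * N), (m.factorial : ℚ)⁻¹ • (adA y)^[m] a) :=
  exp_ad_bch_general I hIr N hnil
end

section
/- Gauge group action on Maurer–Cartan elements: in the ℤ/2-graded differential setting below, let λ ∈ 𝒜₀ be a nilpotent even element and let α ∈ 𝒜₁ be a Maurer–Cartan element (dα + α·α = 0). Then the element exp(ad_λ)(α) − Σ_{n≥0} (1/(n+1)!)·ad_λⁿ(dλ), i.e. Σ_{n≥0} (1/n!)·ad_λⁿ(α) − Σ_{n≥0} (1/(n+1)!)·ad_λⁿ(dλ), is again a Maurer–Cartan element: it lies in 𝒜₁ and satisfies the Maurer–Cartan equation dβ + β·β = 0. -/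
open Finset
open scoped Nat

section CauchyProduct

variable {R : Type*} [NonUnitalNonAssocSemiring R]

theorem succ_nsmul_sum_antidiagonal_succ (u v : ℕ → R) (k : ℕ) :
    (k + 1) • ∑ p ∈ antidiagonal (k + 1), u p.1 * v p.2 =
      ∑ p ∈ antidiagonal k,
        ((p.1 + 1) • u (p.1 + 1) * v p.2 + u p.1 * ((p.2 + 1) • v (p.2 + 1))) := by
  have hsplit : (k + 1) • ∑ p ∈ antidiagonal (k + 1), u p.1 * v p.2 =
      ∑ p ∈ antidiagonal (k + 1), p.1 • (u p.1 * v p.2) +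
        ∑ p ∈ antidiagonal (k + 1), p.2 • (u p.1 * v p.2) := by
    rw [smul_sum, ← sum_add_distrib]
    refine sum_congr rfl fun p hp => ?_
    rw [← add_smul, mem_antidiagonal.mp hp]
  rw [hsplit, Nat.sum_antidiagonal_succ, Nat.sum_antidiagonal_succ', sum_add_distrib]
  simp only [zero_smul, zero_add, smul_mul_assoc, mul_smul_comm]

theorem sum_range_mul_sum_range_eq_sum_antidiagonal (u v : ℕ → R) {m n K : ℕ}
    (hu : ∀ i, m ≤ i → u i = 0) (hv : ∀ j, n ≤ j → v j = 0) (hK : m + n ≤ K) :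
    (∑ i ∈ range m, u i) * ∑ j ∈ range n, v j =
      ∑ k ∈ range K, ∑ p ∈ antidiagonal k, u p.1 * v p.2 := by
  have hv' : ∀ i < m, ∑ j ∈ range n, v j = ∑ j ∈ range (K - i), v j := fun i hi =>
    sum_subset (range_subset_range.mpr (by omega)) fun j _ hj => hv j (by simpa using hj)
  calc (∑ i ∈ range m, u i) * ∑ j ∈ range n, v j
      = ∑ i ∈ range K, u i * ∑ j ∈ range (K - i), v j := by
        rw [sum_mul]
        refine sum_subset_zero_on_sdiff (range_subset_range.mpr (by omega)) ?_ ?_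
        · intro i hi
          rw [hu i (by simpa using (mem_sdiff.mp hi).2), zero_mul]
        · intro i hi
          rw [hv' i (mem_range.mp hi)]
    _ = ∑ k ∈ range K, ∑ i ∈ range (k + 1), u i * v (k - i) := by
        simp only [mul_sum]
        exact (sum_range_diag_flip K fun i j => u i * v j).symm
    _ = ∑ k ∈ range K, ∑ p ∈ antidiagonal k, u p.1 * v p.2 := by
        simp only [Nat.sum_antidiagonal_eq_sum_range_succ (fun i j => u i * v j)]

end CauchyProduct

theorem succ_nsmul_inv_factorial_succ_smul {M : Type*} [AddCommGroup M] [Module ℚ M]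
    (n : ℕ) (y : M) : (n + 1) • (((n + 1)! : ℚ)⁻¹ • y) = (n ! : ℚ)⁻¹ • y := by
  rw [← Nat.cast_smul_eq_nsmul ℚ, smul_smul, Nat.factorial_succ]
  congr 1
  push_cast
  field_simp

section Nilpotent

variable {A : Type*} [Ring A] [Algebra ℚ A]

def expTerm (x : A) (n : ℕ) : A := (n ! : ℚ)⁻¹ • x ^ n

@[simp]
theorem expTerm_zero (x : A) : expTerm x 0 = 1 := by simp [expTerm]

theorem expTerm_eq_zero {x : A} {N n : ℕ} (hx : x ^ N = 0) (h : N ≤ n) : expTerm x n = 0 := by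
  rw [expTerm, pow_eq_zero_of_le h hx, smul_zero]

theorem exp_eq_sum_expTerm {x : A} {k : ℕ} (hx : x ^ k = 0) :
    IsNilpotent.exp x = ∑ n ∈ range k, expTerm x n :=
  IsNilpotent.exp_eq_sum hx

theorem succ_nsmul_expTerm_succ (x : A) (n : ℕ) :
    (n + 1) • expTerm x (n + 1) = expTerm x n * x := by
  rw [expTerm, pow_succ, succ_nsmul_inv_factorial_succ_smul, expTerm, smul_mul_assoc]

theorem succ_nsmul_expTerm_succ' (x : A) (n : ℕ) :
    (n + 1) • expTerm x (n + 1) = x * expTerm x n := by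
  rw [expTerm, pow_succ', succ_nsmul_inv_factorial_succ_smul, expTerm, mul_smul_comm]

theorem exp_mem_of_mem_zero {ι : Type*} [AddMonoid ι] {𝒜 : ι → Submodule ℚ A}
    [SetLike.GradedMonoid 𝒜] {x : A} (hx : x ∈ 𝒜 0) : IsNilpotent.exp x ∈ 𝒜 0 :=
  Submodule.sum_mem _ fun n _ => Submodule.smul_mem _ _ (by simpa using SetLike.pow_mem_graded n hx)

theorem adA_smul (l : A) (c : ℚ) (a : A) : adA l (c • a) = c • adA l a := by
  simp only [adA, mul_smul_comm, smul_mul_assoc, smul_sub]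

theorem sum_antidiagonal_expTerm_mul_mul_expTerm_neg (l a : A) (k : ℕ) :
    ∑ p ∈ antidiagonal k, expTerm l p.1 * (a * expTerm (-l) p.2) =
      (k ! : ℚ)⁻¹ • (adA l)^[k] a := by
  induction k with
  | zero => simp
  | succ k ih =>
    have := IsAddTorsionFree.of_module_rat A
    refine nsmul_right_injective k.succ_ne_zero ?_
    calc (k + 1) • ∑ p ∈ antidiagonal (k + 1), expTerm l p.1 * (a * expTerm (-l) p.2)
        = ∑ p ∈ antidiagonal k, (l * expTerm l p.1 * (a * expTerm (-l) p.2) +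
            expTerm l p.1 * (a * (expTerm (-l) p.2 * -l))) := by
          rw [succ_nsmul_sum_antidiagonal_succ (expTerm l) (fun q => a * expTerm (-l) q)]
          simp only [← mul_smul_comm, succ_nsmul_expTerm_succ' l, succ_nsmul_expTerm_succ (-l)]
      _ = adA l (∑ p ∈ antidiagonal k, expTerm l p.1 * (a * expTerm (-l) p.2)) := by
          simp only [adA, mul_sum, sum_mul, ← sum_sub_distrib]
          refine sum_congr rfl fun p _ => ?_
          noncomm_ring
      _ = (k + 1) • (((k + 1)! : ℚ)⁻¹ • (adA l)^[k + 1] a) := by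
          rw [ih, adA_smul, succ_nsmul_inv_factorial_succ_smul, Function.iterate_succ_apply']

theorem sum_range_inv_factorial_smul_adA_iterate {l : A} {N : ℕ} (hl : l ^ N = 0) (a : A) :
    ∑ n ∈ range (2 * N), (n ! : ℚ)⁻¹ • (adA l)^[n] a =
      IsNilpotent.exp l * a * IsNilpotent.exp (-l) := by
  have hl' : (-l) ^ N = 0 := by rw [neg_pow, hl, mul_zero]
  rw [exp_eq_sum_expTerm hl, exp_eq_sum_expTerm hl', mul_assoc, mul_sum,
    sum_range_mul_sum_range_eq_sum_antidiagonal _ (fun q => a * expTerm (-l) q)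
      (fun i hi => expTerm_eq_zero hl hi) (fun j hj => by rw [expTerm_eq_zero hl' hj, mul_zero])
      (two_mul N).ge]
  exact sum_congr rfl fun k _ => (sum_antidiagonal_expTerm_mul_mul_expTerm_neg l a k).symm

/-- The terms `D (expTerm l p) * l * expTerm (-l) q` cancel, which leaves the previous
coefficient identity at `a = D l`. -/
theorem sum_antidiagonal_succ_map_expTerm_mul_expTerm_neg (D : A →ₗ[ℚ] A) {l : A}
    (hD : ∀ n, D (l ^ n * l) = D (l ^ n) * l + l ^ n * D l) (k : ℕ) :
    ∑ p ∈ antidiagonal (k + 1), D (expTerm l p.1) * expTerm (-l) p.2 =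
      ((k + 1)! : ℚ)⁻¹ • (adA l)^[k] (D l) := by
  have hDu : ∀ n, (n + 1) • D (expTerm l (n + 1)) = D (expTerm l n) * l + expTerm l n * D l := by
    intro n
    rw [← map_nsmul, succ_nsmul_expTerm_succ]
    simp only [expTerm, smul_mul_assoc, map_smul, hD, smul_add]
  have := IsAddTorsionFree.of_module_rat A
  refine nsmul_right_injective k.succ_ne_zero ?_
  calc (k + 1) • ∑ p ∈ antidiagonal (k + 1), D (expTerm l p.1) * expTerm (-l) p.2
      = ∑ p ∈ antidiagonal k, expTerm l p.1 * (D l * expTerm (-l) p.2) := by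
        rw [succ_nsmul_sum_antidiagonal_succ (fun n => D (expTerm l n)) (expTerm (-l))]
        simp only [hDu, succ_nsmul_expTerm_succ' (-l)]
        refine sum_congr rfl fun p _ => ?_
        noncomm_ring
    _ = (k + 1) • (((k + 1)! : ℚ)⁻¹ • (adA l)^[k] (D l)) := by
        rw [sum_antidiagonal_expTerm_mul_mul_expTerm_neg, succ_nsmul_inv_factorial_succ_smul]

theorem sum_range_inv_factorial_succ_smul_adA_iterate (D : A →ₗ[ℚ] A) {l : A} {N : ℕ}
    (hl : l ^ N = 0) (hD1 : D 1 = 0) (hD : ∀ n, D (l ^ n * l) = D (l ^ n) * l + l ^ n * D l) :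
    ∑ n ∈ range (2 * N), ((n + 1)! : ℚ)⁻¹ • (adA l)^[n] (D l) =
      D (IsNilpotent.exp l) * IsNilpotent.exp (-l) := by
  have hl' : (-l) ^ N = 0 := by rw [neg_pow, hl, mul_zero]
  rw [exp_eq_sum_expTerm hl, exp_eq_sum_expTerm hl', map_sum,
    sum_range_mul_sum_range_eq_sum_antidiagonal (fun n => D (expTerm l n)) (expTerm (-l))
      (fun i hi => by rw [expTerm_eq_zero hl hi, map_zero]) (fun j hj => expTerm_eq_zero hl' hj)
      (by omega : N + N ≤ 2 * N + 1), sum_range_succ']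
  simp [hD1, sum_antidiagonal_succ_map_expTerm_mul_expTerm_neg D hD]

end Nilpotent

def gaugeAction {A D : Type*} [Ring A] [FunLike D A A] (d : D) (E F α : A) : A :=
  E * α * F - d E * F

theorem map_gaugeAction_add_mul_self {A D : Type*} [Ring A] [FunLike D A A]
    [AddMonoidHomClass D A A] (d : D) {E F α : A} (hEF : E * F = 1) (hFE : F * E = 1)
    (hd1 : d 1 = 0) (hdE : ∀ b, d (E * b) = d E * b + E * d b)
    (hdF : ∀ b, d (F * b) = d F * b + F * d b) (hdα : ∀ b, d (α * b) = d α * b - α * d b)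
    (hddE : ∀ b, d (d E * b) = -(d E * d b)) :
    d (gaugeAction d E F α) + gaugeAction d E F α * gaugeAction d E F α =
      E * (d α + α * α) * F := by
  have hFdEF : F * d E * F = -d F := by
    have hFdE : F * d E = -(d F * E) := by
      rw [eq_neg_iff_add_eq_zero, add_comm, ← hdF, hFE, hd1]
    rw [hFdE, neg_mul, mul_assoc, hEF, mul_one]
  have hdβ : d (gaugeAction d E F α) =
      d E * α * F + E * d α * F - E * α * d F + d E * d F := by
    rw [gaugeAction, map_sub, mul_assoc, hdE, hdα, hddE]
    noncomm_ring
  have hβ2 : gaugeAction d E F α * gaugeAction d E F α =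
      E * α * α * F + E * α * d F - d E * α * F - d E * d F := by
    calc gaugeAction d E F α * gaugeAction d E F α
        = E * α * (F * E) * α * F - E * α * (F * d E * F) - d E * (F * E) * α * F +
            d E * (F * d E * F) := by rw [gaugeAction]; noncomm_ring
      _ = _ := by rw [hFE, hFdEF]; noncomm_ring
  rw [hdβ, hβ2]
  noncomm_ring

theorem gauge_action_maurer_cartan_general {A : Type*} [Ring A] [Algebra ℚ A]
    (𝒜 : ZMod 2 → Submodule ℚ A)
    (hone : (1 : A) ∈ 𝒜 0)
    (hmul : ∀ i j : ZMod 2, 𝒜 i * 𝒜 j ≤ 𝒜 (i + j))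
    (d : A →ₗ[ℚ] A)
    (hdgrade : ∀ i : ZMod 2, (𝒜 i).map d ≤ 𝒜 (i + 1))
    (hdsq : d ∘ₗ d = 0)
    (hleibniz : ∀ i : ZMod 2, ∀ a ∈ 𝒜 i, ∀ b : A,
      d (a * b) = d a * b + ((-1 : ℚ) ^ i.val) • (a * d b))
    (l : A) (N : ℕ) (hl : l ∈ 𝒜 0) (hlnil : l ^ N = 0)
    (α : A) (hα : α ∈ 𝒜 1) (hMC : d α + α * α = 0) :
    let β : A :=
      (∑ n ∈ Finset.range (2 * N), (n.factorial : ℚ)⁻¹ • (adA l)^[n] α)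
        - ∑ n ∈ Finset.range (2 * N), ((n + 1).factorial : ℚ)⁻¹ • (adA l)^[n] (d l)
    β ∈ 𝒜 1 ∧ d β + β * β = 0 := by
  intro β
  have : SetLike.GradedMonoid 𝒜 :=
    { one_mem := hone, mul_mem := fun i j _ _ ha hb => hmul i j (Submodule.mul_mem_mul ha hb) }
  have hleib0 : ∀ a ∈ 𝒜 0, ∀ b, d (a * b) = d a * b + a * d b := by simpa using hleibniz 0
  have hleib1 : ∀ a ∈ 𝒜 1, ∀ b, d (a * b) = d a * b - a * d b := by
    simpa [sub_eq_add_neg, ZMod.val_one] using hleibniz 1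
  have hd1 : d 1 = 0 := by simpa using hleib0 1 hone 1
  set E := IsNilpotent.exp l
  set F := IsNilpotent.exp (-l)
  have hE : E ∈ 𝒜 0 := exp_mem_of_mem_zero hl
  have hdE : d E ∈ 𝒜 1 := by simpa using hdgrade 0 (Submodule.mem_map_of_mem hE)
  have hF : F ∈ 𝒜 0 := exp_mem_of_mem_zero (neg_mem hl)
  have hβ : β = gaugeAction d E F α := by
    rw [gaugeAction, ← sum_range_inv_factorial_smul_adA_iterate hlnil,
      ← sum_range_inv_factorial_succ_smul_adA_iterate d hlnil hd1
        fun n => hleib0 _ (by simpa using SetLike.pow_mem_graded n hl) l]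
  have hddE : ∀ b, d (d E * b) = -(d E * d b) := fun b => by
    rw [hleib1 _ hdE, show d (d E) = 0 from LinearMap.congr_fun hdsq E, zero_mul, zero_sub]
  refine ⟨?_, ?_⟩
  · rw [hβ, gaugeAction]
    exact sub_mem (by simpa using SetLike.mul_mem_graded (SetLike.mul_mem_graded hE hα) hF)
      (by simpa using SetLike.mul_mem_graded hdE hF)
  · rw [hβ, map_gaugeAction_add_mul_self d (IsNilpotent.exp_mul_exp_neg_self ⟨N, hlnil⟩)
      (IsNilpotent.exp_neg_mul_exp_self ⟨N, hlnil⟩) hd1 (hleib0 _ hE) (hleib0 _ hF)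
      (hleib1 _ hα) hddE, hMC, mul_zero, zero_mul]

/-- Gauge group action on Maurer–Cartan elements: for a nilpotent even gauge
`λ` and a Maurer–Cartan element `α`, the element
`exp(ad_λ)(α) − Σ_{n≥0} ad_λⁿ(dλ)/(n+1)!` is again a Maurer–Cartan element. -/
theorem gauge_action_maurer_cartan {A : Type*} [Ring A] [Algebra ℚ A]
    (𝒜 : ZMod 2 → Submodule ℚ A)
    (hinternal : DirectSum.IsInternal 𝒜)
    (hone : (1 : A) ∈ 𝒜 0)
    (hmul : ∀ i j : ZMod 2, 𝒜 i * 𝒜 j ≤ 𝒜 (i + j))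
    (d : A →ₗ[ℚ] A)
    (hdgrade : ∀ i : ZMod 2, (𝒜 i).map d ≤ 𝒜 (i + 1))
    (hdsq : d ∘ₗ d = 0)
    (hleibniz : ∀ i : ZMod 2, ∀ a ∈ 𝒜 i, ∀ b : A,
      d (a * b) = d a * b + ((-1 : ℚ) ^ i.val) • (a * d b))
    (l : A) (N : ℕ) (hl : l ∈ 𝒜 0) (hlnil : l ^ N = 0)
    (α : A) (hα : α ∈ 𝒜 1) (hMC : d α + α * α = 0) :
    let β : A :=
      (∑ n ∈ Finset.range (2 * N), (n.factorial : ℚ)⁻¹ • (adA l)^[n] α)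
        - ∑ n ∈ Finset.range (2 * N), ((n + 1).factorial : ℚ)⁻¹ • (adA l)^[n] (d l)
    β ∈ 𝒜 1 ∧ d β + β * β = 0 :=
  gauge_action_maurer_cartan_general 𝒜 hone hmul d hdgrade hdsq hleibniz l N hl hlnil α hα hMC
end

section
/- Derivative of the exponential: let A be a unital associative ℚ-algebra, D : A → A a ℚ-linear derivation (D(ab) = D(a)·b + a·D(b)), and λ ∈ A a nilpotent element. Then D(exp(λ))·exp(−λ) = Σ_{n≥0} (1/(n+1)!)·ad_λⁿ(D(λ)). -/
open Finset
open scoped Nat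

section Leibniz

variable {A : Type*} [Ring A] {D : A → A}

theorem map_one_eq_zero_of_leibniz (hD : ∀ a b : A, D (a * b) = D a * b + a * D b) :
    D 1 = 0 := by
  simpa using hD 1 1

/-- `m!` times the `t^m`-coefficient of `D(exp(t x)) * exp(-t x)`; `derivExpCoeff_succ` is the
differential equation `g' = D x + ad_x g` satisfied by this function of `t`. -/
def derivExpCoeff (D : A → A) (x : A) (m : ℕ) : A :=
  ∑ p ∈ antidiagonal m, m.choose p.1 • (D (x ^ p.1) * (-x) ^ p.2)

theorem derivExpCoeff_zero (hD : ∀ a b : A, D (a * b) = D a * b + a * D b) (x : A) :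
    derivExpCoeff D x 0 = 0 := by
  simp [derivExpCoeff, map_one_eq_zero_of_leibniz hD]

theorem derivExpCoeff_succ (hD : ∀ a b : A, D (a * b) = D a * b + a * D b) (x : A) (m : ℕ) :
    derivExpCoeff D x (m + 1) = D x * (x + -x) ^ m + adA x (derivExpCoeff D x m) := by
  rw [derivExpCoeff, sum_antidiagonal_choose_succ_nsmul (fun i j => D (x ^ i) * (-x) ^ j),
    (Commute.neg_right (Commute.refl x)).add_pow', adA, derivExpCoeff, mul_sum, mul_sum, sum_mul,
    sub_eq_add_neg, ← sum_neg_distrib, ← sum_add_distrib, ← sum_add_distrib, ← sum_add_distrib]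
  refine sum_congr rfl fun p hp => ?_
  rw [Nat.choose_symm_of_eq_add (mem_antidiagonal.1 hp).symm, pow_succ' x, hD, pow_succ (-x)]
  simp only [add_mul, smul_add, mul_smul_comm, smul_mul_assoc, mul_neg, smul_neg, mul_assoc]
  abel

theorem derivExpCoeff_succ_eq_iterate_adA (hD : ∀ a b : A, D (a * b) = D a * b + a * D b)
    (x : A) (n : ℕ) : derivExpCoeff D x (n + 1) = (adA x)^[n] (D x) := by
  induction n with
  | zero => simp [derivExpCoeff_succ hD, derivExpCoeff_zero hD, adA]
  | succ n ih =>
    rw [derivExpCoeff_succ hD, ih, add_neg_cancel, zero_pow n.succ_ne_zero, mul_zero, zero_add,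
      Function.iterate_succ_apply']

end Leibniz

theorem sum_range_sum_range_eq_sum_range_sum_antidiagonal {M : Type*} [AddCommMonoid M]
    {N K : ℕ} (hK : 2 * N ≤ K + 1) (f : ℕ → ℕ → M) (hf : ∀ i j, N ≤ i ∨ N ≤ j → f i j = 0) :
    ∑ i ∈ range N, ∑ j ∈ range N, f i j = ∑ m ∈ range K, ∑ p ∈ antidiagonal m, f p.1 p.2 := by
  rw [← sum_product' (f := f), sum_sigma' (range K) (fun m => antidiagonal m)]
  refine sum_bij_ne_zero (fun p _ _ => ⟨p.1 + p.2, p⟩) ?_ ?_ ?_ ?_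
  · intro p hp _
    simp only [mem_product, mem_range] at hp
    simp only [mem_sigma, mem_range, HasAntidiagonal.mem_antidiagonal, and_true]
    omega
  · intro p _ _ q _ _ h
    exact (Sigma.mk.inj_iff.1 h).2.eq
  · rintro ⟨m, i, j⟩ hp hne
    have hij : i < N ∧ j < N := by
      by_contra h
      exact hne (hf i j (by omega))
    refine ⟨(i, j), by simpa [mem_product] using hij, hne, ?_⟩
    simp only [mem_sigma, HasAntidiagonal.mem_antidiagonal] at hp
    simp [hp.2]
  · intro p _ _
    rfl

theorem inv_factorial_mul_inv_factorial {K : Type*} [Field K] [CharZero K] (i j : ℕ) :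
    ((i ! : K)⁻¹ * (j ! : K)⁻¹) = ((i + j)! : K)⁻¹ * (i + j).choose i := by
  rw [Nat.cast_add_choose, div_eq_mul_inv, inv_mul_cancel_left₀ (mod_cast (i + j).factorial_ne_zero), mul_inv]

theorem derivation_exp_formula {A : Type*} [Ring A] [Algebra ℚ A]
    (D : A →ₗ[ℚ] A) (hD : ∀ a b : A, D (a * b) = D a * b + a * D b)
    (l : A) (N : ℕ) (hlnil : l ^ N = 0) :
    D (expNil N l) * expNil N (-l)
      = ∑ n ∈ Finset.range (2 * N), ((n + 1).factorial : ℚ)⁻¹ • (adA l)^[n] (D l) := by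
  have hneg : (-l) ^ N = 0 := by rw [neg_pow, hlnil, mul_zero]
  have hvanish : ∀ i j, N ≤ i ∨ N ≤ j →
      ((i ! : ℚ)⁻¹ * (j ! : ℚ)⁻¹) • (D (l ^ i) * (-l) ^ j) = 0 := by
    rintro i j (hi | hj)
    · rw [pow_eq_zero_of_le hi hlnil, map_zero, zero_mul, smul_zero]
    · rw [pow_eq_zero_of_le hj hneg, mul_zero, smul_zero]
  calc D (expNil N l) * expNil N (-l)
      = ∑ i ∈ range N, ∑ j ∈ range N, ((i ! : ℚ)⁻¹ * (j ! : ℚ)⁻¹) • (D (l ^ i) * (-l) ^ j) := by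
        simp only [expNil, map_sum, map_smul, sum_mul_sum, smul_mul_smul_comm]
    _ = ∑ m ∈ range (2 * N + 1), (m ! : ℚ)⁻¹ • derivExpCoeff D l m := by
        rw [sum_range_sum_range_eq_sum_range_sum_antidiagonal (K := 2 * N + 1) (by omega) _ hvanish]
        refine sum_congr rfl fun m _ => ?_
        rw [derivExpCoeff, smul_sum]
        refine sum_congr rfl fun p hp => ?_
        rw [← HasAntidiagonal.mem_antidiagonal.1 hp, inv_factorial_mul_inv_factorial, mul_smul,
          Nat.cast_smul_eq_nsmul]
    _ = _ := by
        rw [sum_range_succ', derivExpCoeff_zero hD, smul_zero, add_zero]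
        simp only [derivExpCoeff_succ_eq_iterate_adA hD]
end
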